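/- arXiv:2204.11131 — 2 statements merged into one kernel-verified Lean document; each statement's English description precedes it below -/
import Mathlib

section
/- The Shapley value is efficient: for any utility function u on subsets of a finite player set D of size n, the sum over all players t in D of their Shapley values φ(t) equals u(D) - u(∅). -/
open Finset

/-- The Shapley value of player `t` with respect to utility `u` on `n` players. -/
noncomputable def shapley {n : ℕ} (u : Finset (Fin n) → ℝ) (t : Fin n) : ℝ :=
  (n : ℝ)⁻¹ * ∑ S ∈ (Finset.univ.erase t).powerset,
    (((n - 1).choose S.card : ℝ))⁻¹ * (u (insert t S) - u S)

/-!
Write the Shapley value as `∑ S, w(|S|) (u(S ∪ {t}) - u(S))` with `w(k) = 1 / (n C(n-1, k))`.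
Regrouping `∑ t φ(t)` by the coalition `T` whose utility is counted, `u(T)` gets the coefficient
`|T| w(|T| - 1) - (n - |T|) w(|T|)`. As `n C(n-1, k-1) = k C(n, k)` and
`n C(n-1, k) = (n - k) C(n, k)`, both terms equal `1 / C(n, |T|)` whenever they are present, so
the coefficient is `1` at `T = D`, `-1` at `T = ∅`, and `0` otherwise.
-/

namespace Finset

variable {α M : Type*} [Fintype α] [DecidableEq α] [AddCommMonoid M]

theorem sum_powerset_erase_insert (a : α) (f : Finset α → M) :
    ∑ S ∈ (univ.erase a).powerset, f (insert a S) = ∑ T with a ∈ T, f T := by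
  refine sum_nbij' (insert a) (erase · a) ?_ ?_ ?_ ?_ fun _ _ ↦ rfl <;> intro S hS <;>
    simp_all [subset_erase]

theorem sum_sum_powerset_erase_insert (f : Finset α → M) :
    ∑ a, ∑ S ∈ (univ.erase a).powerset, f (insert a S) = ∑ T, #T • f T := by
  simp_rw [sum_powerset_erase_insert]
  rw [sum_comm' (t' := univ) (s' := id) (by simp)]
  simp

theorem sum_sum_powerset_erase (f : Finset α → M) :
    ∑ a, ∑ S ∈ (univ.erase a).powerset, f S = ∑ S, #Sᶜ • f S := by
  rw [sum_comm' (t' := univ) (s' := compl) (by simp [subset_erase])]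
  simp

end Finset

noncomputable def shapleyWeight (n k : ℕ) : ℝ := ((n : ℝ) * (n - 1).choose k)⁻¹

theorem natCast_mul_shapleyWeight_pred {n k : ℕ} (hk : 0 < k) (hkn : k ≤ n) :
    k * shapleyWeight n (k - 1) = (n.choose k : ℝ)⁻¹ := by
  obtain ⟨j, rfl⟩ : ∃ j, k = j + 1 := ⟨k - 1, by omega⟩
  obtain ⟨m, rfl⟩ : ∃ m, n = m + 1 := ⟨n - 1, by omega⟩
  have hchoose : ((m + 1 : ℕ) : ℝ) * m.choose j = (j + 1 : ℕ) * (m + 1).choose (j + 1) := by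
    exact_mod_cast (Nat.add_one_mul_choose_eq m j).trans (mul_comm _ _)
  rw [shapleyWeight, Nat.add_sub_cancel, Nat.add_sub_cancel, hchoose, mul_inv,
    mul_inv_cancel_left₀ (by positivity)]

theorem sub_mul_shapleyWeight {n k : ℕ} (hkn : k < n) :
    ((n : ℝ) - k) * shapleyWeight n k = (n.choose k : ℝ)⁻¹ := by
  obtain ⟨m, rfl⟩ : ∃ m, n = m + 1 := ⟨n - 1, by omega⟩
  have hchoose :
      ((m + 1 : ℕ) : ℝ) * m.choose k = ((m + 1 : ℕ) - k : ℝ) * (m + 1).choose k := by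
    rw [← Nat.cast_sub hkn.le]
    exact_mod_cast (mul_comm _ _).trans ((Nat.choose_mul_succ_eq m k).trans (mul_comm _ _))
  have hk : ((m + 1 : ℕ) : ℝ) - k ≠ 0 := sub_ne_zero.2 (by exact_mod_cast hkn.ne')
  rw [shapleyWeight, Nat.add_sub_cancel, hchoose, mul_inv, mul_inv_cancel_left₀ hk]

noncomputable def shapleyCoeff (n k : ℕ) : ℝ :=
  k * shapleyWeight n (k - 1) - ((n : ℝ) - k) * shapleyWeight n k

theorem shapleyCoeff_eq {n k : ℕ} (hkn : k ≤ n) :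
    shapleyCoeff n k = (if k = n then 1 else 0) - (if k = 0 then 1 else 0) := by
  rw [shapleyCoeff]
  rcases Nat.eq_zero_or_pos k with rfl | hk <;> rcases hkn.eq_or_lt with rfl | hkn
  · simp
  · rw [sub_mul_shapleyWeight hkn]
    simp [hkn.ne]
  · simp [natCast_mul_shapleyWeight_pred hk le_rfl, hk.ne']
  · simp [natCast_mul_shapleyWeight_pred hk hkn.le, sub_mul_shapleyWeight hkn, hk.ne', hkn.ne]

theorem shapley_eq_sum_shapleyWeight {n : ℕ} (u : Finset (Fin n) → ℝ) (t : Fin n) :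
    shapley u t = ∑ S ∈ (univ.erase t).powerset,
      (shapleyWeight n #S * u (insert t S) - shapleyWeight n #S * u S) := by
  rw [shapley, mul_sum]
  refine sum_congr rfl fun S _ ↦ ?_
  rw [shapleyWeight, mul_inv]
  ring

theorem sum_shapley_eq_sum_shapleyCoeff_mul {n : ℕ} (u : Finset (Fin n) → ℝ) :
    ∑ t, shapley u t = ∑ T, shapleyCoeff n #T * u T := by
  have hinsert (t : Fin n) (S : Finset (Fin n)) (hS : S ∈ (univ.erase t).powerset) :
      shapleyWeight n #S * u (insert t S) =
        shapleyWeight n (#(insert t S) - 1) * u (insert t S) := by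
    rw [card_insert_of_notMem (by simp_all [subset_erase]), Nat.add_sub_cancel]
  simp_rw [shapley_eq_sum_shapleyWeight, sum_sub_distrib]
  rw [sum_congr rfl fun t _ ↦ sum_congr rfl (hinsert t),
    sum_sum_powerset_erase_insert (fun T ↦ shapleyWeight n (#T - 1) * u T),
    sum_sum_powerset_erase, ← sum_sub_distrib]
  refine sum_congr rfl fun T _ ↦ ?_
  rw [shapleyCoeff, card_compl, Fintype.card_fin, nsmul_eq_mul, nsmul_eq_mul,
    Nat.cast_sub (card_finset_fin_le T)]
  ring

theorem shapley_efficiency (n : ℕ) (u : Finset (Fin n) → ℝ) :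
    ∑ t : Fin n, shapley u t = u Finset.univ - u ∅ := by
  have hcoeff (T : Finset (Fin n)) :
      shapleyCoeff n #T = (if T = univ then 1 else 0) - (if T = ∅ then 1 else 0) := by
    have huniv : #T = n ↔ T = univ := by rw [← card_eq_iff_eq_univ, Fintype.card_fin]
    simp only [shapleyCoeff_eq (card_finset_fin_le T), huniv, card_eq_zero]
  simp [sum_shapley_eq_sum_shapleyCoeff_mul, hcoeff, sub_mul, sum_sub_distrib]
end

section
/- Variable restriction is sound: restricting an ADD by fixing variable x_i to value b yields a diagram over the remaining variables whose evaluation on any assignment v equals the evaluation of the original diagram on v extended with x_i := b. -/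
/-- An additive decision diagram over `k` Boolean variables, whose sink carries
a constant value (so that restricted diagrams can absorb edge increments). -/
inductive ADD : ℕ → Type
  | sink (c : ℤ) : ADD 0
  | node {k : ℕ} (wL wH : ℤ) (lo hi : ADD k) : ADD (k + 1)

/-- Evaluation of an ADD on a Boolean assignment. -/
def ADD.eval : {k : ℕ} → ADD k → (Fin k → Bool) → ℤ
  | _, .sink c, _ => c
  | _, .node wL wH lo hi, v =>
      if v 0 then wH + hi.eval (fun i => v i.succ) else wL + lo.eval (fun i => v i.succ)

/-- Add a constant increment to every path of an ADD. -/
def ADD.addConst : {k : ℕ} → ℤ → ADD k → ADD k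
  | _, c, .sink c' => .sink (c + c')
  | _, c, .node wL wH lo hi => .node (c + wL) (c + wH) lo hi

/-- Restriction `N[xᵢ ← b]`: remove the layer for variable `i`, rewiring the
diagram through the low child (adding `wL`) if `b = false`, or through the high
child (adding `wH`) if `b = true`. -/
def ADD.restrict : {k : ℕ} → ADD (k + 1) → Fin (k + 1) → Bool → ADD k
  | 0, .node wL wH lo hi, _, b =>
      ADD.addConst (if b then wH else wL) (if b then hi else lo)
  | _ + 1, .node wL wH lo hi, i, b =>
      if h : i = 0 then
        ADD.addConst (if b then wH else wL) (if b then hi else lo)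
      else
        .node wL wH (lo.restrict (i.pred h) b) (hi.restrict (i.pred h) b)

/-! Induction on the position of the restricted variable. At the top layer, restriction selects
the branch for `b` and folds its edge weight into the root (`addConst`), which is exactly one step
of evaluation on `Fin.cons b v`; below the top it commutes with the root node, and
`Fin.insertNth j.succ b (Fin.cons a w) = Fin.cons a (Fin.insertNth j b w)` lets the induction
hypothesis apply to both children. -/

namespace ADD

theorem eval_node_cons {k : ℕ} (wL wH : ℤ) (lo hi : ADD k) (x : Bool) (w : Fin k → Bool) :
    (node wL wH lo hi).eval (Fin.cons x w) = if x then wH + hi.eval w else wL + lo.eval w :=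
  rfl

theorem eval_addConst {k : ℕ} (c : ℤ) (d : ADD k) (v : Fin k → Bool) :
    (d.addConst c).eval v = c + d.eval v := by
  cases d with
  | sink c' => rfl
  | node wL wH lo hi =>
    simp only [addConst, eval]
    split <;> ring

theorem restrict_succ {k : ℕ} (wL wH : ℤ) (lo hi : ADD (k + 1)) (j : Fin (k + 1)) (b : Bool) :
    (node wL wH lo hi).restrict j.succ b = node wL wH (lo.restrict j b) (hi.restrict j b) := by
  simp [restrict, Fin.succ_ne_zero]

theorem eval_restrict_zero {k : ℕ} (d : ADD (k + 1)) (b : Bool) (v : Fin k → Bool) :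
    (d.restrict 0 b).eval v = d.eval (Fin.cons b v) := by
  cases d with
  | node wL wH lo hi =>
    have hzero : (node wL wH lo hi).restrict 0 b =
        addConst (if b then wH else wL) (if b then hi else lo) := by
      cases k <;> rfl
    rw [hzero, eval_addConst, eval_node_cons]
    cases b <;> rfl

end ADD

theorem add_restrict_sound {k : ℕ} (d : ADD (k + 1)) (i : Fin (k + 1)) (b : Bool)
    (v : Fin k → Bool) :
    (d.restrict i b).eval v = d.eval (i.insertNth b v) := by
  induction k with
  | zero => rw [Fin.fin_one_eq_zero i, ADD.eval_restrict_zero, Fin.insertNth_zero']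
  | succ k ih =>
    cases d with
    | node wL wH lo hi =>
      cases i using Fin.cases with
      | zero => rw [ADD.eval_restrict_zero, Fin.insertNth_zero']
      | succ j =>
        rw [ADD.restrict_succ, ← Fin.cons_self_tail v, Fin.insertNth_succ_cons,
          ADD.eval_node_cons, ADD.eval_node_cons, ih, ih]
end
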